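/- For every positive braid word w on n strands, applying φ_w entrywise to the matrix A yields φ_w(A) = Φ^L_w · A · Φ^R_w. -/
import Mathlib


/-!
STATEMENT 6: For every positive braid word `w` on `n` strands, applying `φ_w` entrywise to
the matrix `A` yields `φ_w(A) = Φ^L_w · A · Φ^R_w`.

Setup as in the paper: `R₀ = ℂ[μ^{±1}, λ^{±1}, U^{±1}]` (modeled as
`AddMonoidAlgebra ℂ (Fin 3 →₀ ℤ)`, with `μ = x₀`), `F` is the polynomial ring over `R₀` in
the variables `a_{ij}`, `i ≠ j ∈ Fin n` (0-indexed, so `σ_k` corresponds to the pair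
`(k, k+1)` with `k + 1 < n`), and a positive braid word is a list of such indices `k`.
-/

noncomputable section

/-- The Laurent polynomial ring `R₀ = ℂ[μ^{±1}, λ^{±1}, U^{±1}]`. -/
abbrev R0 : Type := AddMonoidAlgebra ℂ (Fin 3 →₀ ℤ)

/-- The Laurent generator `μ`. -/
def muv : R0 := AddMonoidAlgebra.single (Finsupp.single 0 1) 1

/-- The index set of the variables `a_{ij}`, `i ≠ j`. -/
abbrev Vars (n : ℕ) := {p : Fin n × Fin n // p.1 ≠ p.2}

/-- The polynomial ring `F` over `R₀` in the variables `a_{ij}`. -/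
abbrev Fpoly (n : ℕ) := MvPolynomial (Vars n) R0

/-- The generator `a_{ij}` (junk value `0` if `i = j`; all uses below have `i ≠ j`). -/
def av (n : ℕ) (i j : Fin n) : Fpoly n :=
  if h : i ≠ j then MvPolynomial.X ⟨(i, j), h⟩ else 0

/-- The image of the generator `a_{ij}` under `φ_{σ_k}`, where `K, K1` stand for the
strands `k, k+1`. -/
def phiGen (n : ℕ) (K K1 : Fin n) (i j : Fin n) : Fpoly n :=
  if i = K ∧ j = K1 then -(av n K1 K)
  else if i = K1 ∧ j = K then -(av n K K1)
  else if i = K then av n K1 j - av n K1 K * av n K j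
  else if i = K1 then av n K j
  else if j = K then av n i K1 - av n i K * av n K K1
  else if j = K1 then av n i K
  else av n i j

/-- The `R₀`-algebra endomorphism `φ_{σ_k}` of `F`. -/
def phi (n : ℕ) (K K1 : Fin n) : Fpoly n →ₐ[R0] Fpoly n :=
  MvPolynomial.aeval fun v => phiGen n K K1 v.1.1 v.1.2

/-- A positive braid word is a list of generator indices; `φ_w = φ_{σ_{k₁}} ∘ ⋯ ∘ φ_{σ_{k_ℓ}}`. -/
def phiWord (n : ℕ) : List {k : ℕ // k + 1 < n} → (Fpoly n →ₐ[R0] Fpoly n)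
  | [] => AlgHom.id R0 (Fpoly n)
  | k :: w =>
      (phi n ⟨k.1, by have := k.2; omega⟩ ⟨k.1 + 1, k.2⟩).comp (phiWord n w)

/-- The matrix `Φ^L_{σ_k}`: identity outside rows/columns `k, k+1`, with
`2×2` block `[[−a_{k+1,k}, 1], [1, 0]]` there. -/
def PhiLgen (n : ℕ) (K K1 : Fin n) : Matrix (Fin n) (Fin n) (Fpoly n) :=
  Matrix.of fun i j =>
    if i = K ∧ j = K then -(av n K1 K)
    else if i = K ∧ j = K1 then 1
    else if i = K1 ∧ j = K then 1
    else if i = K1 ∧ j = K1 then 0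
    else if i = j then 1 else 0

/-- The matrix `Φ^R_{σ_k}`: identity outside rows/columns `k, k+1`, with
`2×2` block `[[−a_{k,k+1}, 1], [1, 0]]` there. -/
def PhiRgen (n : ℕ) (K K1 : Fin n) : Matrix (Fin n) (Fin n) (Fpoly n) :=
  Matrix.of fun i j =>
    if i = K ∧ j = K then -(av n K K1)
    else if i = K ∧ j = K1 then 1
    else if i = K1 ∧ j = K then 1
    else if i = K1 ∧ j = K1 then 0
    else if i = j then 1 else 0

/-- `Φ^L` of the empty word is the identity, and `Φ^L_{σ_k w'} = φ_{σ_k}(Φ^L_{w'})·Φ^L_{σ_k}`. -/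
def PhiL (n : ℕ) : List {k : ℕ // k + 1 < n} → Matrix (Fin n) (Fin n) (Fpoly n)
  | [] => 1
  | k :: w =>
      (PhiL n w).map (phi n ⟨k.1, by have := k.2; omega⟩ ⟨k.1 + 1, k.2⟩) *
        PhiLgen n ⟨k.1, by have := k.2; omega⟩ ⟨k.1 + 1, k.2⟩

/-- `Φ^R` of the empty word is the identity, and `Φ^R_{σ_k w'} = Φ^R_{σ_k}·φ_{σ_k}(Φ^R_{w'})`. -/
def PhiR (n : ℕ) : List {k : ℕ // k + 1 < n} → Matrix (Fin n) (Fin n) (Fpoly n)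
  | [] => 1
  | k :: w =>
      PhiRgen n ⟨k.1, by have := k.2; omega⟩ ⟨k.1 + 1, k.2⟩ *
        (PhiR n w).map (phi n ⟨k.1, by have := k.2; omega⟩ ⟨k.1 + 1, k.2⟩)

/-- The matrix `A`, with `A_{ii} = 1 − μ`, `A_{ij} = a_{ij}` for `i < j`,
and `A_{ij} = −μ·a_{ij}` for `i > j`. -/
def Amat (n : ℕ) : Matrix (Fin n) (Fin n) (Fpoly n) :=
  Matrix.of fun i j =>
    if i = j then 1 - MvPolynomial.C muv
    else if i < j then av n i j
    else -(MvPolynomial.C muv * av n i j)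

lemma phi_C (n : ℕ) (K K1 : Fin n) (r : R0) :
    phi n K K1 (MvPolynomial.C r) = MvPolynomial.C r := by
  simp [phi, MvPolynomial.aeval_C, MvPolynomial.algebraMap_eq]

lemma phi_av (n : ℕ) (K K1 i j : Fin n) :
    phi n K K1 (av n i j) = if i = j then 0 else phiGen n K K1 i j := by
  by_cases h : i = j
  · simp [av, h]
  · simp [av, h, phi]

lemma PhiLgen_mul (n : ℕ) (K K1 : Fin n) (hne : K ≠ K1) (X : Matrix (Fin n) (Fin n) (Fpoly n))
    (i j : Fin n) :
    (PhiLgen n K K1 * X) i j =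
      if i = K then -(av n K1 K) * X K j + X K1 j
      else if i = K1 then X K j else X i j := by
  rw [Matrix.mul_apply]
  by_cases h1 : i = K
  · rw [if_pos h1]
    have key : ∀ p : Fin n, PhiLgen n K K1 i p * X p j =
        (if p = K then -(av n K1 K) * X K j else 0) + (if p = K1 then X K1 j else 0) := by
      intro p
      simp only [PhiLgen, Matrix.of_apply]
      split_ifs <;> first | ring1 | (subst_vars; ring1) | (exfalso; simp only [not_and, Fin.ext_iff, not_lt] at *; omega)
    simp [key, Finset.sum_add_distrib]
  · rw [if_neg h1]
    by_cases h2 : i = K1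
    · rw [if_pos h2]
      have key : ∀ p : Fin n, PhiLgen n K K1 i p * X p j =
          (if p = K then X K j else 0) := by
        intro p
        simp only [PhiLgen, Matrix.of_apply]
        split_ifs <;> first | ring1 | (subst_vars; ring1) | (exfalso; simp only [not_and, Fin.ext_iff, not_lt] at *; omega)
      simp [key]
    · rw [if_neg h2]
      have key : ∀ p : Fin n, PhiLgen n K K1 i p * X p j =
          (if p = i then X i j else 0) := by
        intro p
        simp only [PhiLgen, Matrix.of_apply]
        split_ifs <;> first | ring1 | (subst_vars; ring1) | (exfalso; simp only [not_and, Fin.ext_iff, not_lt] at *; omega)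
      simp [key]

lemma mul_PhiRgen (n : ℕ) (K K1 : Fin n) (hne : K ≠ K1) (X : Matrix (Fin n) (Fin n) (Fpoly n))
    (i j : Fin n) :
    (X * PhiRgen n K K1) i j =
      if j = K then X i K * -(av n K K1) + X i K1
      else if j = K1 then X i K else X i j := by
  rw [Matrix.mul_apply]
  by_cases h1 : j = K
  · rw [if_pos h1]
    have key : ∀ p : Fin n, X i p * PhiRgen n K K1 p j =
        (if p = K then X i K * -(av n K K1) else 0) + (if p = K1 then X i K1 else 0) := by
      intro p
      simp only [PhiRgen, Matrix.of_apply]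
      split_ifs <;> first | ring1 | (subst_vars; ring1) | (exfalso; simp only [not_and, Fin.ext_iff, not_lt] at *; omega)
    simp [key, Finset.sum_add_distrib]
  · rw [if_neg h1]
    by_cases h2 : j = K1
    · rw [if_pos h2]
      have key : ∀ p : Fin n, X i p * PhiRgen n K K1 p j =
          (if p = K then X i K else 0) := by
        intro p
        simp only [PhiRgen, Matrix.of_apply]
        split_ifs <;> first | ring1 | (subst_vars; ring1) | (exfalso; simp only [not_and, Fin.ext_iff, not_lt] at *; omega)
      simp [key]
    · rw [if_neg h2]
      have key : ∀ p : Fin n, X i p * PhiRgen n K K1 p j =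
          (if p = j then X i j else 0) := by
        intro p
        simp only [PhiRgen, Matrix.of_apply]
        split_ifs <;> first | ring1 | (subst_vars; ring1) | (exfalso; simp only [not_and, Fin.ext_iff, not_lt] at *; omega)
      simp [key]

set_option maxHeartbeats 4000000 in
set_option maxHeartbeats 4000000 in
lemma Amat_phi (n : ℕ) (K K1 : Fin n) (hadj : (K : ℕ) + 1 = (K1 : ℕ)) :
    (Amat n).map (phi n K K1) = PhiLgen n K K1 * Amat n * PhiRgen n K K1 := by
  have hne : K ≠ K1 := by simp only [ne_eq, Fin.ext_iff]; omega
  have hne' : K1 ≠ K := by simp only [ne_eq, Fin.ext_iff]; omega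
  have hlt : K < K1 := by simp only [Fin.lt_def]; omega
  have hnlt : ¬ K1 < K := by simp only [Fin.lt_def, not_lt]; omega
  refine Matrix.ext fun i j => ?_
  rw [Matrix.map_apply, mul_PhiRgen n K K1 hne]
  simp only [PhiLgen_mul n K K1 hne]
  simp only [Amat, Matrix.of_apply, apply_ite (phi n K K1), map_sub, map_one, map_neg,
    map_mul, phi_C, phi_av, phiGen]
  simp only [hne, hne', hlt, hnlt, lt_self_iff_false, if_true, if_false, ite_true, ite_false,
    eq_self_iff_true]
  split_ifs <;>
    first
      | ring1
      | (subst_vars; ring1)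
      | (exfalso; simp only [not_and, Fin.ext_iff, Fin.lt_def, not_lt] at *; omega)

/-- `φ_w(A) = Φ^L_w · A · Φ^R_w`. -/
theorem phiWord_Amat (n : ℕ) (hn : 2 ≤ n) (w : List {k : ℕ // k + 1 < n}) :
    (Amat n).map (phiWord n w) = PhiL n w * Amat n * PhiR n w := by
  induction w with
  | nil =>
      rw [PhiL, PhiR, one_mul, mul_one, phiWord, AlgHom.coe_id, Matrix.map_id]
  | cons k w ih =>
      have hK : k.1 < n := by have := k.2; omega
      have hmul : ∀ M N : Matrix (Fin n) (Fin n) (Fpoly n),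
          (M * N).map ⇑(phi n ⟨k.1, hK⟩ ⟨k.1 + 1, k.2⟩) =
            M.map ⇑(phi n ⟨k.1, hK⟩ ⟨k.1 + 1, k.2⟩) * N.map ⇑(phi n ⟨k.1, hK⟩ ⟨k.1 + 1, k.2⟩) :=
        fun M N => Matrix.map_mul (f := (phi n ⟨k.1, hK⟩ ⟨k.1 + 1, k.2⟩).toRingHom)
      rw [phiWord, AlgHom.coe_comp, ← Matrix.map_map, ih, PhiL, PhiR]
      rw [hmul, hmul, Amat_phi n ⟨k.1, hK⟩ ⟨k.1 + 1, k.2⟩ rfl]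
      simp only [Matrix.mul_assoc]

end
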